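/- arXiv:1504.01355 — 5 statements merged into one kernel-verified Lean document; each statement's English description precedes it below -/
import Mathlib

section
/- Let K ⊆ L be finite fields with [L:K] = m, and let C ⊆ Lⁿ be a K-linear MDS code with |C| = |L|^{k_L}. Let V₁,…,Vₙ ⊆ K^k be the column spaces of C (k = dim_K C = k_L·m). Then for every subset I ⊆ {1,…,n}, dim_K (Σ_{i∈I} Vᵢ) = m · min{k_L, |I|}. -/
/-! Expanding in the basis `b`, the generators of `Σ_{i ∈ I} Vᵢ` are the rows of the matrix of
`x ↦ (Σ_r x_r c_r)|_I : K^k → L^I`, so by row rank = column rank the dimension in question is the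
rank of this restriction map. A nonzero codeword has weight at least `d`, so the restriction is
injective as soon as `|I| ≥ k_L = n - d + 1`, with rank `k = m k_L`. If `|I| < k_L`, enlarge `I` to
some `J` with `|J| = k_L`: the restriction to `J` is an injective map between spaces of the same
dimension `m k_L`, hence surjective, and so is the restriction to `I`, of rank `m |I|`. -/

/-- Column space of a family of codewords at coordinate `i`. -/
def columnSpace {K L : Type*} [Field K] [Field L] [Algebra K L]
    {m n : ℕ} {ι : Type*} (b : Module.Basis (Fin m) K L) (c : ι → (Fin n → L)) (i : Fin n) :
    Submodule K (ι → K) :=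
  Submodule.span K (Set.range fun j : Fin m => fun r : ι => b.repr (c r i) j)

open Module Function

theorem hammingNorm_le_card_sub_of_eqOn_zero {ι β : Type*} [Fintype ι] [DecidableEq β] [Zero β]
    {u : ι → β} {J : Finset ι} (hu : ∀ i ∈ J, u i = 0) :
    hammingNorm u ≤ Fintype.card ι - J.card := by
  classical
  calc hammingNorm u ≤ Jᶜ.card :=
        Finset.card_le_card fun i hi =>
          Finset.mem_compl.mpr fun hiJ => (Finset.mem_filter.mp hi).2 (hu i hiJ)
    _ = Fintype.card ι - J.card := Finset.card_compl J

namespace LinearMap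

variable {K V W ι : Type*} [Field K] [AddCommGroup V] [Module K V] [AddCommGroup W] [Module K W]

def restrictCoords (T : V →ₗ[K] ι → W) (J : Finset ι) : V →ₗ[K] J → W :=
  funLeft K W ((↑) : J → ι) ∘ₗ T

theorem surjective_restrictCoords_of_subset {T : V →ₗ[K] ι → W} {I J : Finset ι} (hIJ : I ⊆ J)
    (hJ : Surjective (T.restrictCoords J)) : Surjective (T.restrictCoords I) :=
  (funLeft_surjective_of_injective K W (Set.inclusion hIJ) (Set.inclusion_injective hIJ)).comp hJ

theorem finrank_range_restrictCoords [Fintype ι] [FiniteDimensional K V] [FiniteDimensional K W]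
    (T : V →ₗ[K] ι → W) {t : ℕ} (ht : t ≤ Fintype.card ι) (hV : finrank K V = t * finrank K W)
    (hinj : ∀ J : Finset ι, t ≤ J.card → Injective (T.restrictCoords J)) (I : Finset ι) :
    finrank K (range (T.restrictCoords I)) = finrank K W * min t I.card := by
  have finrank_coords (J : Finset ι) : finrank K (J → W) = J.card * finrank K W := by
    simp [finrank_pi_fintype]
  rcases le_total t I.card with htI | hIt
  · rw [finrank_range_of_inj (hinj I htI), hV, min_eq_left htI, mul_comm]
  · obtain ⟨J, hIJ, hJ⟩ := Finset.exists_superset_card_eq hIt ht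
    have hJsurj : Surjective (T.restrictCoords J) :=
      (injective_iff_surjective_of_finrank_eq_finrank (by rw [hV, finrank_coords, hJ])).mp
        (hinj J hJ.ge)
    rw [range_eq_top.mpr (surjective_restrictCoords_of_subset hIJ hJsurj), finrank_top,
      finrank_coords, min_eq_right hIt, mul_comm]

theorem injective_restrictCoords_of_le_hammingNorm [DecidableEq W] [Fintype ι]
    {T : V →ₗ[K] ι → W} (hT : Injective T) {d : ℕ}
    (hd : ∀ u ∈ range T, u ≠ 0 → d ≤ hammingNorm u)
    {J : Finset ι} (hJ : Fintype.card ι < J.card + d) :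
    Injective (T.restrictCoords J) := by
  rw [← ker_eq_bot, ker_eq_bot']
  intro x hx
  suffices T x = 0 from hT (this.trans (map_zero T).symm)
  by_contra hne
  have hle := hammingNorm_le_card_sub_of_eqOn_zero (u := T x) fun i hi => congrFun hx ⟨i, hi⟩
  have := hd _ ⟨x, rfl⟩ hne
  have := J.card_le_univ
  omega

end LinearMap

theorem finrank_iSup_columnSpace {K L κ : Type*} [Field K] [Field L] [Algebra K L] [Fintype κ]
    {m n : ℕ} (b : Basis (Fin m) K L) (c : κ → Fin n → L) (I : Finset (Fin n)) :
    finrank K ↥(⨆ i ∈ I, columnSpace b c i) =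
      finrank K (LinearMap.range ((Fintype.linearCombination K c).restrictCoords I)) := by
  let M : Matrix (I × Fin m) κ K := fun p r => b.repr (c r p.1) p.2
  let e : (I → L) ≃ₗ[K] (I × Fin m → K) :=
    (LinearEquiv.piCongrRight fun _ => b.equivFun).trans (LinearEquiv.curry K K I (Fin m)).symm
  have hsup : ⨆ i ∈ I, columnSpace b c i = Submodule.span K (Set.range M.row) := by
    simp only [columnSpace, ← Submodule.span_iUnion₂]
    congr 1
    ext v
    simp [M, Matrix.row]
  have hmulVec : M.mulVecLin = (e : (I → L) →ₗ[K] _) ∘ₗ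
      (Fintype.linearCombination K c).restrictCoords I := by
    ext x ⟨i, j⟩
    change ∑ r, b.repr (c r i) j * x r = b.repr ((∑ r, x r • c r) i) j
    simp [Finset.sum_apply, mul_comm]
  rw [hsup, ← Matrix.rank_eq_finrank_span_row, Matrix.rank, hmulVec, LinearMap.range_comp,
    LinearEquiv.finrank_map_eq]

theorem stmt_4_general {K L : Type*} [Field K] [Field L] [Algebra K L]
    [DecidableEq L] {m n k d kL : ℕ}
    (b : Module.Basis (Fin m) K L)
    (C : Submodule K (Fin n → L)) (c : Fin k → (Fin n → L))
    (hli : LinearIndependent K c) (hspan : Submodule.span K (Set.range c) = C)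
    (hd_le : ∀ u ∈ C, u ≠ 0 → d ≤ hammingNorm u)
    (hkL : kL = n - d + 1) (hk : k = kL * m) :
    ∀ I : Finset (Fin n),
      Module.finrank K ↥(⨆ i ∈ I, columnSpace b c i) = m * min kL I.card := by
  intro I
  have : FiniteDimensional K L := .of_basis b
  have hm : finrank K L = m := by simp [finrank_eq_card_basis b]
  have hkLn : kL ≤ n := by
    have hcard := hli.fintype_card_le_finrank
    simp only [Fintype.card_fin, finrank_pi_fintype, hm, Finset.sum_const, Finset.card_univ,
      smul_eq_mul, hk] at hcard
    exact Nat.le_of_mul_le_mul_right hcard (hm ▸ finrank_pos)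
  rw [finrank_iSup_columnSpace, ← hm]
  refine LinearMap.finrank_range_restrictCoords _ (by simpa) (by simp [hk, hm]) (fun J hJ => ?_) I
  have hd : ∀ u ∈ LinearMap.range (Fintype.linearCombination K c), u ≠ 0 → d ≤ hammingNorm u := by
    rwa [Fintype.range_linearCombination, hspan]
  exact LinearMap.injective_restrictCoords_of_le_hammingNorm
    (linearIndependent_iff_injective_fintypeLinearCombination.mp hli) hd
    (by rw [Fintype.card_fin]; omega)

/-- For a `K`-linear MDS code with `|C| = |L|^{k_L}`, the column spaces satisfy
`dim_K (Σ_{i ∈ I} Vᵢ) = m · min {k_L, |I|}` for every `I ⊆ {1,…,n}`. -/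
theorem stmt_4 {K L : Type*} [Field K] [Field L] [Algebra K L]
    [Fintype K] [Fintype L] [DecidableEq L] {m n k d kL : ℕ}
    (hn : 0 < n) (b : Module.Basis (Fin m) K L)
    (C : Submodule K (Fin n → L)) (c : Fin k → (Fin n → L))
    (hli : LinearIndependent K c) (hspan : Submodule.span K (Set.range c) = C)
    (hd_le : ∀ u ∈ C, u ≠ 0 → d ≤ hammingNorm u)
    (hd_eq : ∃ u ∈ C, u ≠ 0 ∧ hammingNorm u = d)
    (hkL : kL = n - d + 1) (hk : k = kL * m)
    (hMDS : Nat.card C = Fintype.card L ^ kL) :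
    ∀ I : Finset (Fin n),
      Module.finrank K ↥(⨆ i ∈ I, columnSpace b c i) = m * min kL I.card :=
  stmt_4_general b C c hli hspan hd_le hkL hk
end

section
/- Let K ⊆ L be finite fields and C ⊆ Lⁿ a K-linear MDS code with column spaces V₁,…,Vₙ ⊆ K^k (as defined via bases of C and of L over K) with k_L ≥ 2. Then for all i ≠ j, Vᵢ ∩ Vⱼ = {0}, and each Vᵢ has dim_K Vᵢ = m = [L:K]. -/
/-!
An MDS code is systematic on any `k_L` coordinates, so for `k_L ≥ 2` evaluation at two distinct
coordinates `i ≠ j` maps `C` onto `L × L`. The column space `V_i` consists of the vectors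
`(F (c r i))_r` with `F` a `K`-linear functional on `L`. If such a vector also equals
`(G (c r j))_r`, then `u ↦ F (u i) - G (u j)` vanishes on `C`, and evaluating it on codewords
with `u j = 0` forces `F = 0`. Hence `V_i ∩ V_j = 0`, and `F ↦ (F (c r i))_r` is injective, so
`dim V_i = dim L^* = m`.
-/

section Restriction

variable {ι L : Type*} [Fintype ι] [AddCommGroup L] {C : AddSubgroup (ι → L)}

theorem AddSubgroup.le_card_of_nat_card_eq_pow [Fintype L] [Nontrivial L] {k : ℕ}
    (hcard : Nat.card C = Fintype.card L ^ k) : k ≤ Fintype.card ι := by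
  have hle := Nat.card_le_card_of_injective _ (Subtype.coe_injective (p := (· ∈ C)))
  rwa [hcard, Nat.card_fun, Nat.card_eq_fintype_card, Nat.card_eq_fintype_card,
    Nat.pow_le_pow_iff_right Fintype.one_lt_card] at hle

variable [DecidableEq ι] [DecidableEq L]

theorem AddSubgroup.injective_restrict_of_card_compl_lt_hammingNorm (S : Finset ι)
    (hdist : ∀ u ∈ C, u ≠ 0 → Sᶜ.card < hammingNorm u) :
    Function.Injective fun (u : C) (s : S) => (u : ι → L) s := by
  intro u v huv
  by_contra hne
  have hsub : (u : ι → L) - v ≠ 0 := sub_ne_zero.mpr (Subtype.coe_injective.ne hne)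
  have hsupp : ({t | ((u : ι → L) - v) t ≠ 0} : Finset ι) ⊆ Sᶜ := fun t ht =>
    Finset.mem_compl.mpr fun hts => (Finset.mem_filter.mp ht).2 <| sub_eq_zero.mpr <|
      congrFun huv ⟨t, hts⟩
  exact (Finset.card_le_card hsupp).not_gt (hdist _ (C.sub_mem u.2 v.2) hsub)

variable [Fintype L]

theorem AddSubgroup.bijective_restrict_of_singleton_bound {k : ℕ} (S : Finset ι)
    (hS : S.card = k)
    (hdist : ∀ u ∈ C, u ≠ 0 → Fintype.card ι + 1 ≤ hammingNorm u + k)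
    (hcard : Nat.card C = Fintype.card L ^ k) :
    Function.Bijective fun (u : C) (s : S) => (u : ι → L) s := by
  refine (Nat.bijective_iff_injective_and_card _).mpr ⟨?_, ?_⟩
  · refine injective_restrict_of_card_compl_lt_hammingNorm S fun u hu hne => ?_
    have := hdist u hu hne
    have := S.card_le_univ
    rw [Finset.card_compl]
    omega
  · simp [hcard, hS]

theorem AddSubgroup.exists_mem_apply_eq_apply_eq [Nontrivial L] {k : ℕ} (hk : 2 ≤ k)
    (hdist : ∀ u ∈ C, u ≠ 0 → Fintype.card ι + 1 ≤ hammingNorm u + k)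
    (hcard : Nat.card C = Fintype.card L ^ k) {i j : ι} (hij : i ≠ j) (x y : L) :
    ∃ u ∈ C, u i = x ∧ u j = y := by
  obtain ⟨S, hijS, hS⟩ := Finset.exists_superset_card_eq
    ((Finset.card_pair hij).trans_le hk) (le_card_of_nat_card_eq_pow hcard)
  have hi : i ∈ S := hijS (by simp)
  have hj : j ∈ S := hijS (by simp)
  obtain ⟨u, hu⟩ := (bijective_restrict_of_singleton_bound S hS hdist hcard).2
    fun s => if (s : ι) = i then x else y
  refine ⟨u, u.2, ?_, ?_⟩
  · simpa using congrFun hu ⟨i, hi⟩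
  · simpa [hij.symm] using congrFun hu ⟨j, hj⟩

end Restriction

section ColumnMap

variable (K : Type*) {L ι κ : Type*} [Field K] [AddCommGroup L] [Module K L]

def columnMap (c : κ → ι → L) (i : ι) : Module.Dual K L →ₗ[K] (κ → K) :=
  LinearMap.pi fun r => Module.Dual.eval K L (c r i)

variable {K}

@[simp]
theorem columnMap_apply (c : κ → ι → L) (i : ι) (F : Module.Dual K L) (r : κ) :
    columnMap K c i F r = F (c r i) :=
  rfl

theorem eq_zero_of_columnMap_eq {c : κ → ι → L} {i j : ι}
    (hpair : ∀ x : L, ∃ u ∈ Submodule.span K (Set.range c), u i = x ∧ u j = 0)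
    {F G : Module.Dual K L} (h : columnMap K c i F = columnMap K c j G) : F = 0 := by
  let Φ : Module.Dual K (ι → L) := F ∘ₗ LinearMap.proj i - G ∘ₗ LinearMap.proj j
  have hΦ : Submodule.span K (Set.range c) ≤ LinearMap.ker Φ := by
    rw [Submodule.span_le]
    rintro _ ⟨r, rfl⟩
    simpa [Φ, sub_eq_zero] using congrFun h r
  ext x
  obtain ⟨u, hu, hui, huj⟩ := hpair x
  simpa [Φ, hui, huj, sub_eq_zero] using hΦ hu

theorem injective_columnMap {c : κ → ι → L} {i j : ι}
    (hpair : ∀ x : L, ∃ u ∈ Submodule.span K (Set.range c), u i = x ∧ u j = 0) :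
    Function.Injective (columnMap K c i) :=
  (injective_iff_map_eq_zero _).mpr fun _ h => eq_zero_of_columnMap_eq (G := 0) hpair (by simpa)

theorem range_columnMap_inf_eq_bot {c : κ → ι → L} {i j : ι}
    (hpair : ∀ x : L, ∃ u ∈ Submodule.span K (Set.range c), u i = x ∧ u j = 0) :
    LinearMap.range (columnMap K c i) ⊓ LinearMap.range (columnMap K c j) = ⊥ := by
  rw [eq_bot_iff]
  rintro _ ⟨⟨F, rfl⟩, G, hG⟩
  simp [eq_zero_of_columnMap_eq hpair hG.symm]

theorem columnSpace_eq_range_columnMap {L : Type*} [Field L] [Algebra K L] {m n : ℕ}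
    (b : Module.Basis (Fin m) K L) (c : κ → Fin n → L) (i : Fin n) :
    columnSpace b c i = LinearMap.range (columnMap K c i) := by
  rw [LinearMap.range_eq_map, ← b.dualBasis.span_eq, Submodule.map_span, ← Set.range_comp]
  unfold columnSpace
  congr 2
  ext t r
  simp only [Function.comp_apply, columnMap_apply, b.dualBasis_apply]

end ColumnMap

theorem stmt_5_general {K L : Type*} [Field K] [Field L] [Algebra K L]
    [Fintype L] [DecidableEq L] {m n k d kL : ℕ}
    (b : Module.Basis (Fin m) K L)
    (C : Submodule K (Fin n → L)) (c : Fin k → (Fin n → L))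
    (hspan : Submodule.span K (Set.range c) = C)
    (hd_le : ∀ u ∈ C, u ≠ 0 → d ≤ hammingNorm u)
    (hkL : kL = n - d + 1) (hkL2 : 2 ≤ kL)
    (hMDS : Nat.card C = Fintype.card L ^ kL) :
    (∀ i j : Fin n, i ≠ j → columnSpace b c i ⊓ columnSpace b c j = ⊥) ∧
    (∀ i : Fin n, Module.finrank K ↥(columnSpace b c i) = m) := by
  have hdist :
      ∀ u ∈ C.toAddSubgroup, u ≠ 0 → Fintype.card (Fin n) + 1 ≤ hammingNorm u + kL :=
    fun u hu hne => by have := hd_le u hu hne; simp only [Fintype.card_fin]; omega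
  have hpair {i j : Fin n} (hij : i ≠ j) (x : L) :
      ∃ u ∈ Submodule.span K (Set.range c), u i = x ∧ u j = 0 :=
    hspan ▸ C.toAddSubgroup.exists_mem_apply_eq_apply_eq hkL2 hdist hMDS hij x 0
  refine ⟨fun i j hij => ?_, fun i => ?_⟩
  · rw [columnSpace_eq_range_columnMap, columnSpace_eq_range_columnMap]
    exact range_columnMap_inf_eq_bot (hpair hij)
  · have : Nontrivial (Fin n) := Fin.nontrivial_iff_two_le.mpr <|
      hkL2.trans (by simpa using C.toAddSubgroup.le_card_of_nat_card_eq_pow hMDS)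
    obtain ⟨j, hj⟩ := exists_ne i
    have : Module.Finite K L := .of_basis b
    rw [columnSpace_eq_range_columnMap,
      LinearMap.finrank_range_of_inj (injective_columnMap (hpair hj.symm)),
      Subspace.dual_finrank_eq, Module.finrank_eq_card_basis b, Fintype.card_fin]

/-- For a `K`-linear MDS code with `k_L ≥ 2`, distinct column spaces intersect
trivially and every column space has dimension `m = [L:K]`. -/
theorem stmt_5 {K L : Type*} [Field K] [Field L] [Algebra K L]
    [Fintype K] [Fintype L] [DecidableEq L] {m n k d kL : ℕ}
    (hn : 0 < n) (b : Module.Basis (Fin m) K L)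
    (C : Submodule K (Fin n → L)) (c : Fin k → (Fin n → L))
    (hli : LinearIndependent K c) (hspan : Submodule.span K (Set.range c) = C)
    (hd_le : ∀ u ∈ C, u ≠ 0 → d ≤ hammingNorm u)
    (hd_eq : ∃ u ∈ C, u ≠ 0 ∧ hammingNorm u = d)
    (hkL : kL = n - d + 1) (hk : k = kL * m) (hkL2 : 2 ≤ kL)
    (hMDS : Nat.card C = Fintype.card L ^ kL) :
    (∀ i j : Fin n, i ≠ j → columnSpace b c i ⊓ columnSpace b c j = ⊥) ∧
    (∀ i : Fin n, Module.finrank K ↥(columnSpace b c i) = m) :=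
  stmt_5_general b C c hspan hd_le hkL hkL2 hMDS
end

section
/- Let V be a vector space of dimension m ≥ 2 over the finite field K with |K| = q. Any partition of V into proper subspaces (a family of proper subspaces such that every nonzero vector lies in exactly one member) has at least q^⌈m/2⌉ + 1 members. -/
/-!
Let `W₀` be a member of largest dimension `d`. If `d ≥ ⌈m/2⌉`, pick `v ∉ W₀`: the `q ^ d`
vectors of `v + W₀` lie in pairwise distinct members other than `W₀` (two of them in one member
would put their nonzero difference in that member and in `W₀`), so there are at least `q ^ d + 1`
members. If `d ≤ ⌊m/2⌋`, counting nonzero vectors gives `q ^ m - 1 ≤ |S| (q ^ d - 1)`, which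
forces `|S| > q ^ ⌈m/2⌉`.
-/

open Module Finset

def IsSubmodulePartition {R M : Type*} [Ring R] [AddCommGroup M] [Module R M]
    (S : Finset (Submodule R M)) : Prop :=
  ∀ v : M, v ≠ 0 → ∃! W : Submodule R M, W ∈ S ∧ v ∈ W

namespace IsSubmodulePartition

variable {R M : Type*} [Ring R] [AddCommGroup M] [Module R M] {S : Finset (Submodule R M)}

theorem nonempty [Nontrivial M] (hS : IsSubmodulePartition S) : S.Nonempty :=
  let ⟨v, hv⟩ := exists_ne (0 : M)
  let ⟨W, ⟨hW, _⟩, _⟩ := hS v hv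
  ⟨W, hW⟩

theorem eq_of_mem_of_mem (hS : IsSubmodulePartition S) {W₁ W₂ : Submodule R M} {v : M}
    (hv : v ≠ 0) (h₁ : W₁ ∈ S) (h₂ : W₂ ∈ S) (hv₁ : v ∈ W₁) (hv₂ : v ∈ W₂) : W₁ = W₂ :=
  (hS v hv).unique ⟨h₁, hv₁⟩ ⟨h₂, hv₂⟩

theorem sum_card_sub_one [Finite M] (hS : IsSubmodulePartition S) :
    ∑ W ∈ S, (Nat.card W - 1) = Nat.card M - 1 := by
  classical
  have := Fintype.ofFinite M
  let nonzero (W : Submodule R M) : Finset M := (univ.filter (· ∈ W)).erase 0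
  have card_nonzero (W : Submodule R M) : (nonzero W).card = Nat.card W - 1 := by
    rw [card_erase_of_mem (by simp), Nat.card_eq_fintype_card, Fintype.card_subtype]
  have cover : univ.erase 0 = S.biUnion nonzero := by
    ext v
    simp only [mem_erase, mem_univ, and_true, mem_biUnion, mem_filter, true_and, nonzero]
    refine ⟨fun hv => ?_, fun ⟨_, _, hv, _⟩ => hv⟩
    obtain ⟨W, ⟨hW, hvW⟩, -⟩ := hS v hv
    exact ⟨W, hW, hv, hvW⟩
  have disjoint : (S : Set (Submodule R M)).PairwiseDisjoint nonzero := by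
    intro W₁ h₁ W₂ h₂ hne
    refine disjoint_left.2 fun v hv₁ hv₂ => hne ?_
    simp only [mem_erase, mem_filter, mem_univ, true_and, nonzero] at hv₁ hv₂
    exact hS.eq_of_mem_of_mem hv₁.1 h₁ h₂ hv₁.2 hv₂.2
  rw [Nat.card_eq_fintype_card, ← card_univ, ← card_erase_of_mem (mem_univ 0), cover,
    card_biUnion disjoint]
  exact sum_congr rfl fun W _ => (card_nonzero W).symm

theorem card_sub_one_le_card_mul [Finite M] (hS : IsSubmodulePartition S) {N : ℕ}
    (hN : ∀ W ∈ S, Nat.card W ≤ N) : Nat.card M - 1 ≤ S.card * (N - 1) := by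
  rw [← hS.sum_card_sub_one, ← smul_eq_mul]
  exact sum_le_card_nsmul _ _ _ fun W hW => Nat.sub_le_sub_right (hN W hW) 1

theorem card_add_one_le (hS : IsSubmodulePartition S) {W₀ : Submodule R M} (hW₀ : W₀ ∈ S)
    (htop : W₀ ≠ ⊤) : Nat.card W₀ + 1 ≤ S.card := by
  obtain ⟨v, hv⟩ : ∃ v, v ∉ W₀ := by simpa [Submodule.eq_top_iff'] using htop
  have hne (w : W₀) : v + w ≠ 0 := fun h =>
    hv (eq_neg_of_add_eq_zero_left h ▸ W₀.neg_mem w.2)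
  choose f hfS hvf using fun w : W₀ => (hS _ (hne w)).exists
  have hf_ne (w : W₀) : f w ≠ W₀ := fun h =>
    hv ((W₀.add_mem_iff_left w.2).1 (h ▸ hvf w :))
  have hf_inj : Function.Injective f := fun w₁ w₂ h => by
    by_contra hw
    have hsub : (w₁ - w₂ : M) ≠ 0 := sub_ne_zero.2 (Subtype.coe_ne_coe.2 hw)
    refine hf_ne w₁ (hS.eq_of_mem_of_mem hsub (hfS w₁) hW₀ ?_ (W₀.sub_mem w₁.2 w₂.2))
    rw [← add_sub_add_left_eq_sub _ _ v]
    exact (f w₁).sub_mem (hvf w₁) (h ▸ hvf w₂)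
  have hcard : Nat.card W₀ ≤ (S.erase W₀).card := by
    rw [← Nat.card_eq_finsetCard]
    exact Nat.card_le_card_of_injective (fun w => ⟨f w, mem_erase.2 ⟨hf_ne w, hfS w⟩⟩)
      fun w₁ w₂ h => hf_inj (congrArg Subtype.val h)
  rw [card_erase_of_mem hW₀] at hcard
  have := card_pos.2 ⟨W₀, hW₀⟩
  omega

end IsSubmodulePartition

/-- `q ^ m - 1 > q ^ ⌈m/2⌉ * (q ^ ⌊m/2⌋ - 1)`, since the right side is `q ^ m - q ^ ⌈m/2⌉`. -/
theorem pow_half_add_one_le_of_pow_sub_one_le_mul {q m d s : ℕ} (hq : 2 ≤ q) (hm : 1 ≤ m)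
    (hd : d ≤ m / 2) (h : q ^ m - 1 ≤ s * (q ^ d - 1)) : q ^ ((m + 1) / 2) + 1 ≤ s := by
  by_contra! hs
  have hq_pos : 1 ≤ q := by omega
  have two_le : 2 ≤ q ^ ((m + 1) / 2) :=
    (Nat.le_self_pow (by omega) q).trans' hq
  have le_pow_m : q ^ ((m + 1) / 2) ≤ q ^ m := Nat.pow_le_pow_right hq_pos (by omega)
  have hsplit : q ^ ((m + 1) / 2) * q ^ (m / 2) = q ^ m := by
    rw [← pow_add]; congr 1; omega
  have : q ^ m - 1 ≤ q ^ m - q ^ ((m + 1) / 2) :=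
    calc q ^ m - 1 ≤ s * (q ^ d - 1) := h
      _ ≤ q ^ ((m + 1) / 2) * (q ^ (m / 2) - 1) := by
        gcongr
        omega
      _ = q ^ m - q ^ ((m + 1) / 2) := by rw [Nat.mul_sub_one, hsplit]
  omega

theorem stmt_11_general {K : Type*} [Field K] [Fintype K] {m : ℕ} (hm : 2 ≤ m)
    (S : Finset (Submodule K (Fin m → K)))
    (hproper : ∀ W ∈ S, W ≠ ⊤)
    (hpart : ∀ v : Fin m → K, v ≠ 0 → ∃! W : Submodule K (Fin m → K), W ∈ S ∧ v ∈ W) :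
    Fintype.card K ^ ((m + 1) / 2) + 1 ≤ S.card := by
  have hpart : IsSubmodulePartition S := hpart
  have hq : 2 ≤ Fintype.card K := Fintype.one_lt_card
  have hcard (W : Submodule K (Fin m → K)) : Nat.card W = Fintype.card K ^ finrank K W := by
    rw [natCard_eq_pow_finrank (K := K), Nat.card_eq_fintype_card]
  have : Nonempty (Fin m) := ⟨⟨0, by omega⟩⟩
  obtain ⟨W₀, hW₀, hmax⟩ := S.exists_max_image (finrank K ·) hpart.nonempty
  by_cases hlarge : (m + 1) / 2 ≤ finrank K W₀
  · calc Fintype.card K ^ ((m + 1) / 2) + 1 ≤ Nat.card W₀ + 1 := by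
          rw [hcard]; gcongr; omega
      _ ≤ S.card := hpart.card_add_one_le hW₀ (hproper W₀ hW₀)
  · refine pow_half_add_one_le_of_pow_sub_one_le_mul hq (by omega) (d := finrank K W₀)
      (by omega) ?_
    have := hpart.card_sub_one_le_card_mul (N := Nat.card W₀) fun W hW => by
      rw [hcard, hcard]; exact Nat.pow_le_pow_right (by omega) (hmax W hW)
    simpa [hcard] using this

/-- Any partition of `K^m` (`m ≥ 2`, `|K| = q`) into proper nonzero subspaces —
a collection of proper subspaces such that every nonzero vector lies in exactly
one member — has at least `q^⌈m/2⌉ + 1` members. -/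
theorem stmt_11 {K : Type*} [Field K] [Fintype K] {m : ℕ} (hm : 2 ≤ m)
    (S : Finset (Submodule K (Fin m → K)))
    (hproper : ∀ W ∈ S, W ≠ ⊤) (hnz : ∀ W ∈ S, W ≠ ⊥)
    (hpart : ∀ v : Fin m → K, v ≠ 0 → ∃! W : Submodule K (Fin m → K), W ∈ S ∧ v ∈ W) :
    Fintype.card K ^ ((m + 1) / 2) + 1 ≤ S.card :=
  stmt_11_general hm S hproper hpart
end

section
/- Let K ⊆ L be finite fields with [L:K] = m, and let C ⊆ Lⁿ be an L-linear code. Consider C as a K-linear code with basis given by {bⱼ·cᵢ} where c₁,…,c_{k_L} is an L-basis of C and b₁,…,b_m a K-basis of L, and let V₁,…,Vₙ ⊆ K^{m·k_L} be the corresponding column spaces. Then each Vᵢ has dim_K Vᵢ ∈ {0, m}. -/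
open Module Submodule

theorem finrank_columnSpace {K L : Type*} [Field K] [Field L] [Algebra K L]
    {m n : ℕ} {ι : Type*} [Fintype ι] (b : Basis (Fin m) K L) (c : ι → Fin n → L)
    (i : Fin n) :
    finrank K (columnSpace b c i) = finrank K (span K (Set.range fun r => c r i)) := by
  let M : Matrix (Fin m) ι K := Matrix.of fun j r => b.repr (c r i) j
  calc finrank K (columnSpace b c i) = M.rank := (M.rank_eq_finrank_span_row).symm
    _ = finrank K ((span K (Set.range fun r => c r i)).map b.equivFun.toLinearMap) := by
      rw [M.rank_eq_finrank_span_cols, map_span, ← Set.range_comp]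
      rfl
    _ = finrank K (span K (Set.range fun r => c r i)) := LinearEquiv.finrank_map_eq _ _

theorem span_range_basis_mul {K L κ ι : Type*} [CommSemiring K] [CommSemiring L] [Algebra K L]
    (b : Basis κ K L) (y : ι → L) :
    span K (Set.range fun p : κ × ι => b p.1 * y p.2) =
      (span L (Set.range y)).restrictScalars K := by
  rw [← span_smul_of_span_eq_top b.span_eq, Set.range_smul_range]
  rfl

theorem stmt_13_general {K L : Type*} [Field K] [Field L] [Algebra K L]
    {m n kL : ℕ} (b : Module.Basis (Fin m) K L)
    (cL : Fin kL → (Fin n → L)) :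
    ∀ i : Fin n,
      Module.finrank K
          ↥(columnSpace b (fun p : Fin m × Fin kL => fun r => b p.1 * cL p.2 r) i) = 0 ∨
      Module.finrank K
          ↥(columnSpace b (fun p : Fin m × Fin kL => fun r => b p.1 * cL p.2 r) i) = m := by
  intro i
  rw [finrank_columnSpace, span_range_basis_mul b fun r => cL r i]
  rcases Ideal.eq_bot_or_top (span L (Set.range fun r => cL r i)) with h | h
  · left
    rw [h, restrictScalars_bot, finrank_bot]
  · right
    rw [h, restrictScalars_top, finrank_top, finrank_eq_card_basis b, Fintype.card_fin]

/-- For an `L`-linear code `C ⊆ Lⁿ`, viewed as a `K`-linear code with `K`-basis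
`{bⱼ • cᵢ}` (`cᵢ` an `L`-basis of `C`, `bⱼ` a `K`-basis of `L`), every column
space has `K`-dimension `0` or `m`. -/
theorem stmt_13 {K L : Type*} [Field K] [Field L] [Algebra K L]
    [Fintype K] [Fintype L] {m n kL : ℕ} (b : Module.Basis (Fin m) K L)
    (C : Submodule L (Fin n → L)) (cL : Fin kL → (Fin n → L))
    (hli : LinearIndependent L cL) (hspan : Submodule.span L (Set.range cL) = C) :
    ∀ i : Fin n,
      Module.finrank K
          ↥(columnSpace b (fun p : Fin m × Fin kL => fun r => b p.1 * cL p.2 r) i) = 0 ∨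
      Module.finrank K
          ↥(columnSpace b (fun p : Fin m × Fin kL => fun r => b p.1 * cL p.2 r) i) = m :=
  stmt_13_general b cL
end

section
/- If L is a finite field, every surjective L-linear Hamming weight-preserving map f : C → C' between L-linear codes C, C' ⊆ Lⁿ extends to a monomial map of Lⁿ, i.e., a map permuting coordinates and multiplying coordinates by nonzero scalars of L (MacWilliams Extension Theorem). -/
/-!
Write `gᵢ = (f ·) i` and `hᵢ = (· : C) i` for the coordinate forms on `C`; weight preservation
says that at every `x` equally many `gᵢ` as `hᵢ` are nonzero. A linear form that is nonzero on a
subspace `W` vanishes on exactly `|W| / |L|` of its vectors, so summing over `x ∈ W` and double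
counting shows that equally many `gᵢ` as `hᵢ` vanish on `W`. For `W = ker ℓ` this says that every
line `L ∙ ℓ` of the dual contains equally many `gᵢ` as `hᵢ`, hence is spanned by equally many of
them. Matching the fibres of `i ↦ L ∙ gᵢ` and `i ↦ L ∙ hᵢ` gives the permutation, and
proportional forms give the scalars.
-/

open Finset LinearMap Submodule

theorem Nat.card_subtype_add_card_subtype_not {α : Type*} [Finite α] (p : α → Prop) :
    Nat.card {a // p a} + Nat.card {a // ¬p a} = Nat.card α := by
  classical
  exact Nat.card_sum.symm.trans (Nat.card_congr (Equiv.sumCompl p))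

section Lines

variable {K M ι : Type*} [DivisionRing K] [AddCommGroup M] [Module K M]

theorem Submodule.mem_span_singleton_iff_eq_zero_or_span_singleton_eq {x m : M} :
    x ∈ K ∙ m ↔ x = 0 ∨ K ∙ x = K ∙ m := by
  constructor
  · intro hx
    obtain ⟨a, rfl⟩ := mem_span_singleton.mp hx
    rcases eq_or_ne a 0 with rfl | ha
    · exact Or.inl (zero_smul K m)
    · exact Or.inr (span_singleton_smul_eq (IsUnit.mk0 a ha) m)
  · rintro (rfl | hx)
    · exact zero_mem _
    · exact hx ▸ mem_span_singleton_self x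

theorem card_span_singleton_eq_eq_of_card_mem_span_singleton_eq [Finite ι] {g h : ι → M}
    (H : ∀ m, Nat.card {i // g i ∈ K ∙ m} = Nat.card {i // h i ∈ K ∙ m})
    (P : Submodule K M) :
    Nat.card {i // K ∙ g i = P} = Nat.card {i // K ∙ h i = P} := by
  by_cases hP : ∃ m, K ∙ m = P
  · obtain ⟨m, rfl⟩ := hP
    rcases eq_or_ne m 0 with rfl | hm
    · simpa only [span_zero_singleton, span_singleton_eq_bot, mem_bot] using H 0
    have hsplit (f : ι → M) : Nat.card {i // f i ∈ K ∙ m} =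
        Nat.card {i // f i = 0} + Nat.card {i // K ∙ f i = K ∙ m} := by
      classical
      simp only [mem_span_singleton_iff_eq_zero_or_span_singleton_eq]
      refine (Nat.card_congr (subtypeOrEquiv _ _ ?_)).trans Nat.card_sum
      intro r hr0 hrspan i hi
      have : K ∙ f i = K ∙ m := hrspan i hi
      rw [hr0 i hi, span_zero_singleton, eq_comm, span_singleton_eq_bot] at this
      exact hm this
    have hzero := H 0
    have hline := H m
    simp only [span_zero_singleton, mem_bot] at hzero
    rw [hsplit g, hsplit h] at hline
    omega
  · push Not at hP
    have (f : ι → M) : IsEmpty {i // K ∙ f i = P} := ⟨fun i => hP _ i.2⟩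
    simp only [Nat.card_of_isEmpty]

end Lines

section LinearForms

variable {L V : Type*} [Field L] [AddCommGroup V] [Module L V]

theorem LinearMap.card_ker_mul_card_of_ne_zero {ℓ : V →ₗ[L] L} (hℓ : ℓ ≠ 0) :
    Nat.card (ker ℓ) * Nat.card L = Nat.card V := by
  rw [(ker ℓ).card_eq_card_quotient_mul_card,
    Nat.card_congr (ℓ.quotKerEquivOfSurjective (surjective_of_ne_zero hℓ)).toEquiv]

theorem LinearMap.card_apply_ne_zero_of_ne_zero [Finite V] {ℓ : V →ₗ[L] L} (hℓ : ℓ ≠ 0) :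
    Nat.card {x // ℓ x ≠ 0} = Nat.card V - Nat.card V / Nat.card L := by
  have hL : 0 < Nat.card L :=
    have : Finite L := Finite.of_surjective ℓ (surjective_of_ne_zero hℓ)
    Nat.card_pos
  have hsplit : Nat.card (ker ℓ) + Nat.card {x // ℓ x ≠ 0} = Nat.card V :=
    Nat.card_subtype_add_card_subtype_not _
  rw [Nat.div_eq_of_eq_mul_left hL (card_ker_mul_card_of_ne_zero hℓ).symm]
  omega

theorem LinearMap.ker_le_ker_iff_mem_span_singleton {ℓ₀ ℓ : V →ₗ[L] L} :
    ker ℓ₀ ≤ ker ℓ ↔ ℓ ∈ L ∙ ℓ₀ := by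
  constructor
  · intro h
    simpa using mem_span_of_iInf_ker_le_ker (ι := Unit) (L := fun _ => ℓ₀) (by simpa using h)
  · intro h
    obtain ⟨a, rfl⟩ := mem_span_singleton.mp h
    exact ker_le_ker_smul ℓ₀ a

variable [DecidableEq L] [Finite V] {ι : Type*} [Fintype ι]

theorem finsum_hammingNorm_apply (g : ι → V →ₗ[L] L) :
    ∑ᶠ x : V, hammingNorm (fun i => g i x) =
      Nat.card {i // g i ≠ 0} * (Nat.card V - Nat.card V / Nat.card L) := by
  classical
  cases nonempty_fintype V
  rw [finsum_eq_sum_of_fintype]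
  calc ∑ x, hammingNorm (fun i => g i x)
      = ∑ i, Nat.card {x // g i x ≠ 0} := by
        simp only [hammingNorm, card_filter, Nat.card_eq_fintype_card, Fintype.card_subtype]
        exact Finset.sum_comm
    _ = ∑ i, if g i ≠ 0 then Nat.card V - Nat.card V / Nat.card L else 0 := by
        refine Fintype.sum_congr _ _ fun i => ?_
        split_ifs with hi
        · exact card_apply_ne_zero_of_ne_zero hi
        · simp [not_not.mp hi]
    _ = _ := by
        rw [← Finset.sum_filter, sum_const, smul_eq_mul, ← Fintype.card_subtype,
          ← Nat.card_eq_fintype_card]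

variable [Finite L]

theorem card_eq_zero_eq_of_hammingNorm_apply_eq {g h : ι → V →ₗ[L] L}
    (H : ∀ x, hammingNorm (fun i => g i x) = hammingNorm (fun i => h i x)) :
    Nat.card {i // g i = 0} = Nat.card {i // h i = 0} := by
  have hpos : 0 < Nat.card V - Nat.card V / Nat.card L :=
    Nat.sub_pos_of_lt (Nat.div_lt_self Nat.card_pos Finite.one_lt_card)
  have hne : Nat.card {i // g i ≠ 0} = Nat.card {i // h i ≠ 0} := by
    refine Nat.eq_of_mul_eq_mul_right hpos ?_
    rw [← finsum_hammingNorm_apply, ← finsum_hammingNorm_apply]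
    exact finsum_congr H
  have hg : Nat.card {i // g i = 0} + Nat.card {i // g i ≠ 0} = Nat.card ι :=
    Nat.card_subtype_add_card_subtype_not _
  have hh : Nat.card {i // h i = 0} + Nat.card {i // h i ≠ 0} = Nat.card ι :=
    Nat.card_subtype_add_card_subtype_not _
  omega

theorem card_mem_span_singleton_eq_of_hammingNorm_apply_eq {g h : ι → V →ₗ[L] L}
    (H : ∀ x, hammingNorm (fun i => g i x) = hammingNorm (fun i => h i x)) (ℓ₀ : V →ₗ[L] L) :
    Nat.card {i // g i ∈ L ∙ ℓ₀} = Nat.card {i // h i ∈ L ∙ ℓ₀} := by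
  have := card_eq_zero_eq_of_hammingNorm_apply_eq (g := fun i => g i ∘ₗ (ker ℓ₀).subtype)
    (h := fun i => h i ∘ₗ (ker ℓ₀).subtype) fun x => H x
  simpa only [← le_ker_iff_comp_subtype_eq_zero, ker_le_ker_iff_mem_span_singleton] using this

theorem exists_perm_units_mul_eq_of_hammingNorm_eq (F G : V →ₗ[L] ι → L)
    (H : ∀ x, hammingNorm (F x) = hammingNorm (G x)) :
    ∃ (π : Equiv.Perm ι) (lam : ι → Lˣ), ∀ x i, F x i = lam i * G x (π i) := by
  let g (i : ι) : V →ₗ[L] L := proj i ∘ₗ F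
  let h (i : ι) : V →ₗ[L] L := proj i ∘ₗ G
  have hlines := card_span_singleton_eq_eq_of_card_mem_span_singleton_eq
    (card_mem_span_singleton_eq_of_hammingNorm_apply_eq (g := g) (h := h) H)
  let e (P : Submodule L (V →ₗ[L] L)) : {i // L ∙ g i = P} ≃ {i // L ∙ h i = P} :=
    (Finite.card_eq.mp (hlines P)).some
  have hπ (i : ι) : L ∙ h (Equiv.ofFiberEquiv e i) = L ∙ g i := Equiv.ofFiberEquiv_map e i
  choose lam hlam using fun i => span_singleton_eq_span_singleton.mp (hπ i)
  exact ⟨Equiv.ofFiberEquiv e, lam, fun x i => (LinearMap.congr_fun (hlam i) x).symm⟩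

end LinearForms

theorem stmt_16_general {L : Type*} [Field L] [Fintype L] [DecidableEq L] {n : ℕ}
    (C : Submodule L (Fin n → L)) (f : C →ₗ[L] (Fin n → L))
    (hf : ∀ x : C, hammingNorm (f x) = hammingNorm (x : Fin n → L)) :
    ∃ (π : Equiv.Perm (Fin n)) (lam : Fin n → Lˣ),
      ∀ (x : C) (i : Fin n), f x i = (lam i : L) * (x : Fin n → L) (π i) :=
  exists_perm_units_mul_eq_of_hammingNorm_eq f C.subtype hf

/-- MacWilliams Extension Theorem: every `L`-linear Hamming weight-preserving
map `f : C → Lⁿ` on an `L`-linear code `C ⊆ Lⁿ` (surjective onto its image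
code `C' = f(C)`) extends to a monomial map of `Lⁿ`, i.e. a coordinate
permutation combined with multiplication of coordinates by nonzero scalars. -/
theorem stmt_16 {L : Type*} [Field L] [Fintype L] [DecidableEq L] {n : ℕ}
    (hn : 0 < n) (C : Submodule L (Fin n → L)) (f : C →ₗ[L] (Fin n → L))
    (hf : ∀ x : C, hammingNorm (f x) = hammingNorm (x : Fin n → L)) :
    ∃ (π : Equiv.Perm (Fin n)) (lam : Fin n → Lˣ),
      ∀ (x : C) (i : Fin n), f x i = (lam i : L) * (x : Fin n → L) (π i) :=
  stmt_16_general C f hf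
end
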